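/- arXiv:2212.00144 — 3 statements merged into one kernel-verified Lean document; each statement's English description precedes it below -/
import Mathlib

section
/- The sum over nonzero lattice momenta p ∈ 2πℤ³ \ {0} of the quantity p² + 8πa − √(|p|⁴ + 16πa p²) − (8πa)²/(2p²) converges absolutely, for any a > 0. -/
/-!
With `x = |p|²` and `b = 8πa`, the summand is `x + b - √(x² + 2bx) - b²/(2x)`, the remainder of the
expansion of `√(x² + 2bx)` at `x = ∞` after its third term; rationalising shows it is at most
`b³/(2x²)`. The sum therefore has the majorant `C ∑ |v|⁻⁴` over `v ∈ ℤ³ \ {0}`, which converges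
because `4 > 3`.
-/

open Real Module

theorem summable_intPi_norm_inv_pow {ι : Type*} [Fintype ι] (n : ℕ) (hn : Fintype.card ι < n) :
    Summable fun v : ι → ℤ => ‖v‖⁻¹ ^ n := by
  let L := Submodule.span ℤ (Set.range (Pi.basisFun ℝ ι))
  have : DiscreteTopology L := ZSpan.discreteTopology_pi_basisFun
  let toL : (ι → ℤ) → L := fun v =>
    ⟨fun i => v i, (Basis.mem_span_iff_repr_mem ℤ _ _).2 fun i => ⟨v i, by simp⟩⟩
  have toL_injective : Function.Injective toL := fun v w h => by
    funext i; simpa [toL] using congrFun (congrArg Subtype.val h) i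
  have norm_toL (v : ι → ℤ) : ‖toL v‖ = ‖v‖ := by
    have (m : ℤ) : ‖(m : ℝ)‖₊ = ‖m‖₊ := NNReal.eq (Int.norm_cast_real m)
    simp [toL, Pi.norm_def, this]
  have hrank : finrank ℤ L < n := (finrank_range_le_card (R := ℤ) (Pi.basisFun ℝ ι)).trans_lt hn
  exact ((ZLattice.summable_norm_pow_inv L n hrank).comp_injective toL_injective).congr
    fun v => by simp only [Function.comp_apply, norm_toL]

theorem abs_add_sub_sqrt_sub_le {b x : ℝ} (hb : 0 ≤ b) (hx : 0 < x) :
    |x + b - √(x ^ 2 + 2 * b * x) - b ^ 2 / (2 * x)| ≤ b ^ 3 / (2 * x ^ 2) := by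
  set r := √(x ^ 2 + 2 * b * x)
  have hr_sq : r ^ 2 = x ^ 2 + 2 * b * x := sq_sqrt (by positivity)
  have hx_le_r : x ≤ r := by nlinarith [sqrt_nonneg (x ^ 2 + 2 * b * x)]
  have hr_le : r ≤ x + b := by nlinarith
  have hgap : 0 ≤ b + r - x := by linarith
  have hden : 0 < x + b + r := by linarith
  -- rationalise: `x + b - r = b² / (x + b + r)`
  have hrat : x + b - r - b ^ 2 / (2 * x) = -(b ^ 2 * (b + r - x) / (2 * x * (x + b + r))) := by
    field_simp
    linear_combination (-(2 * x)) * hr_sq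
  rw [hrat, abs_neg, abs_of_nonneg (by positivity)]
  calc b ^ 2 * (b + r - x) / (2 * x * (x + b + r)) ≤ b ^ 2 * (2 * b) / (2 * x * (2 * x)) := by
        gcongr <;> linarith
    _ = b ^ 3 / (2 * x ^ 2) := by field_simp

theorem norm_sq_le_sum_sq {ι : Type*} [Fintype ι] (v : ι → ℤ) : ‖v‖ ^ 2 ≤ ∑ i, (v i : ℝ) ^ 2 := by
  have hle : ‖v‖ ≤ √(∑ i, (v i : ℝ) ^ 2) := (pi_norm_le_iff_of_nonneg (sqrt_nonneg _)).2 fun i => by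
    rw [← Int.norm_cast_real, Real.norm_eq_abs]
    exact abs_le_sqrt (Finset.single_le_sum (fun j _ => sq_nonneg (v j : ℝ)) (Finset.mem_univ i))
  simpa [sq_sqrt (Finset.sum_nonneg fun i _ => sq_nonneg (v i : ℝ))] using
    pow_le_pow_left₀ (norm_nonneg v) hle 2

/-- Absolute convergence of the Bogoliubov energy sum over nonzero lattice momenta
`p ∈ 2πℤ³ \ {0}` of `p² + 8πa − √(|p|⁴ + 16πa p²) − (8πa)²/(2p²)`, for `a > 0`. -/
theorem stmt0 (a : ℝ) (ha : 0 < a) :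
    Summable (fun v : {v : Fin 3 → ℤ // v ≠ 0} =>
      |((2 * π) ^ 2 * ∑ i, ((v.1 i : ℝ)) ^ 2) + 8 * π * a
        - Real.sqrt (((2 * π) ^ 2 * ∑ i, ((v.1 i : ℝ)) ^ 2) ^ 2
            + 16 * π * a * ((2 * π) ^ 2 * ∑ i, ((v.1 i : ℝ)) ^ 2))
        - (8 * π * a) ^ 2 / (2 * ((2 * π) ^ 2 * ∑ i, ((v.1 i : ℝ)) ^ 2))|) := by
  set b := 8 * π * a
  have hmajorant := ((summable_intPi_norm_inv_pow (ι := Fin 3) 4 (by simp)).mul_left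
    (b ^ 3 / (2 * (2 * π) ^ 4))).comp_injective (Subtype.val_injective (p := (· ≠ 0)))
  refine hmajorant.of_nonneg_of_le (fun _ => abs_nonneg _) fun ⟨v, hv⟩ => ?_
  set x := (2 * π) ^ 2 * ∑ i, (v i : ℝ) ^ 2
  have hx_lower : (2 * π) ^ 2 * ‖v‖ ^ 2 ≤ x :=
    mul_le_mul_of_nonneg_left (norm_sq_le_sum_sq v) (by positivity)
  have hx : 0 < x := hx_lower.trans_lt' (by have := norm_pos_iff.2 hv; positivity)
  calc _ = |x + b - √(x ^ 2 + 2 * b * x) - b ^ 2 / (2 * x)| := by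
          rw [show 16 * π * a * x = 2 * b * x by ring]
    _ ≤ b ^ 3 / (2 * x ^ 2) := abs_add_sub_sqrt_sub_le (by positivity) hx
    _ ≤ b ^ 3 / (2 * ((2 * π) ^ 2 * ‖v‖ ^ 2) ^ 2) := by gcongr
    _ = _ := by simp only [Function.comp_apply]; field_simp
end

section
/- For the smallest positive solution λ_ℓ of tan(√λ(ℓ − a/N)) = √λ ℓ with a/N ≪ ℓ, one has the asymptotic expansion λ_ℓ = (3a/(Nℓ³))·(1 + (9/5)(a/(Nℓ)) + O((a/(Nℓ))²)) as a/(Nℓ) → 0. -/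
/-!
Put `x = √λ (ℓ - b)` and `δ = b / (ℓ - b)`. The equation becomes `tan x = (1 + δ) x`, and
`λ ℓ² = x² (1 + δ)²`. The intermediate value theorem gives a root in `[√δ, 1/2]`, so the least
root has `x ≤ 1/2`, where `tan x = x + x³/3 + 2x⁵/15 + O(x⁷)` by Taylor bounds for `sin` and `cos`
(obtained from `x - x³/6 ≤ sin x` by repeated integration). Hence `δ = x²/3 + 2x⁴/15 + O(x⁶)`;
inverting the series gives `x² = 3δ - 18δ²/5 + O(δ³)`, so `λ ℓ² = 3δ + 12δ²/5 + O(δ³)`, and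
substituting `δ = ε + ε² + O(ε³)`, `ε = b / ℓ`, gives the claim.
-/

open Real Set

lemma le_of_deriv_le_of_le {f g : ℝ → ℝ} {a x : ℝ} (hf : Differentiable ℝ f)
    (hg : Differentiable ℝ g) (hderiv : ∀ y, a < y → deriv f y ≤ deriv g y) (ha : f a ≤ g a)
    (hx : a ≤ x) : f x ≤ g x := by
  have hmono : MonotoneOn (g - f) (Ici a) := by
    refine monotoneOn_of_deriv_nonneg (convex_Ici a) (hg.sub hf).continuous.continuousOn
      (hg.sub hf).differentiableOn fun y hy => ?_
    rw [interior_Ici] at hy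
    rw [deriv_sub (hg y) (hf y)]
    exact sub_nonneg.2 (hderiv y hy)
  have := hmono self_mem_Ici hx hx
  simp only [Pi.sub_apply] at this
  linarith

namespace Real

variable {x : ℝ}

lemma cos_le_taylor_four (hx : 0 ≤ x) : cos x ≤ 1 - x ^ 2 / 2 + x ^ 4 / 24 :=
  le_of_deriv_le_of_le (f := cos) (g := fun y => 1 - y ^ 2 / 2 + y ^ 4 / 24) (by fun_prop)
    (by fun_prop) (fun y hy => by
      simp (disch := fun_prop) only [deriv_cos', deriv_fun_add, deriv_fun_sub, deriv_const',
        deriv_div_const, deriv_fun_pow, deriv_id'']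
      nlinarith [sin_ge_sub_cube hy.le]) (by simp) hx

lemma sin_le_taylor_five (hx : 0 ≤ x) : sin x ≤ x - x ^ 3 / 6 + x ^ 5 / 120 :=
  le_of_deriv_le_of_le (f := sin) (g := fun y => y - y ^ 3 / 6 + y ^ 5 / 120) (by fun_prop)
    (by fun_prop) (fun y hy => by
      simp (disch := fun_prop) only [deriv_sin, deriv_fun_add, deriv_fun_sub,
        deriv_div_const, deriv_fun_pow, deriv_id'']
      nlinarith [cos_le_taylor_four hy.le]) (by simp) hx

lemma taylor_six_le_cos (hx : 0 ≤ x) : 1 - x ^ 2 / 2 + x ^ 4 / 24 - x ^ 6 / 720 ≤ cos x :=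
  le_of_deriv_le_of_le (f := fun y => 1 - y ^ 2 / 2 + y ^ 4 / 24 - y ^ 6 / 720) (g := cos)
    (by fun_prop) (by fun_prop) (fun y hy => by
      simp (disch := fun_prop) only [deriv_cos', deriv_fun_add, deriv_fun_sub, deriv_const',
        deriv_div_const, deriv_fun_pow, deriv_id'']
      nlinarith [sin_le_taylor_five hy.le]) (by simp) hx

lemma taylor_seven_le_sin (hx : 0 ≤ x) : x - x ^ 3 / 6 + x ^ 5 / 120 - x ^ 7 / 5040 ≤ sin x :=
  le_of_deriv_le_of_le (f := fun y => y - y ^ 3 / 6 + y ^ 5 / 120 - y ^ 7 / 5040) (g := sin)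
    (by fun_prop) (by fun_prop) (fun y hy => by
      simp (disch := fun_prop) only [deriv_sin, deriv_fun_add, deriv_fun_sub,
        deriv_div_const, deriv_fun_pow, deriv_id'']
      nlinarith [taylor_six_le_cos hy.le]) (by simp) hx

lemma abs_tan_sub_taylor_le (h0 : 0 ≤ x) (hx : x ≤ 1 / 2) :
    |tan x - (x + x ^ 3 / 3 + 2 / 15 * x ^ 5)| ≤ x ^ 7 := by
  have hcos : 0 < cos x := by nlinarith [one_sub_sq_div_two_le_cos (x := x)]
  have hx9 : x ^ 9 ≤ x ^ 7 / 4 := by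
    nlinarith [mul_le_mul_of_nonneg_left (by nlinarith : x ^ 2 ≤ 1 / 4) (pow_nonneg h0 7)]
  have hlower : (x + x ^ 3 / 3 + 2 / 15 * x ^ 5 - x ^ 7) * cos x ≤ sin x := by
    have hq : 0 ≤ x + x ^ 3 / 3 + 2 / 15 * x ^ 5 - x ^ 7 := by
      nlinarith [pow_le_pow_of_le_one h0 (by linarith) (by norm_num : 1 ≤ 7), pow_nonneg h0 3,
        pow_nonneg h0 5]
    nlinarith [mul_le_mul_of_nonneg_left (cos_le_taylor_four h0) hq, taylor_seven_le_sin h0,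
      pow_nonneg h0 7, pow_nonneg h0 11]
  have hupper : sin x ≤ (x + x ^ 3 / 3 + 2 / 15 * x ^ 5 + x ^ 7) * cos x := by
    have hq : 0 ≤ x + x ^ 3 / 3 + 2 / 15 * x ^ 5 + x ^ 7 := by positivity
    nlinarith [mul_le_mul_of_nonneg_left (taylor_six_le_cos h0) hq, sin_le_taylor_five h0,
      pow_nonneg h0 7, pow_nonneg h0 11, pow_nonneg h0 13]
  rw [tan_eq_sin_div_cos, abs_le]
  constructor
  · linarith [(le_div_iff₀ hcos).2 hlower]
  · linarith [(div_le_iff₀ hcos).2 hupper]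

lemma abs_sub_taylor_le_of_tan_eq {x δ : ℝ} (hx0 : 0 < x) (hx : x ≤ 1 / 2)
    (h : tan x = (1 + δ) * x) : |δ - (x ^ 2 / 3 + 2 / 15 * x ^ 4)| ≤ x ^ 6 := by
  have htan := abs_tan_sub_taylor_le hx0.le hx
  rw [h, show (1 + δ) * x - (x + x ^ 3 / 3 + 2 / 15 * x ^ 5) =
    (δ - (x ^ 2 / 3 + 2 / 15 * x ^ 4)) * x by ring, abs_mul, abs_of_pos hx0,
    show x ^ 7 = x ^ 6 * x by ring] at htan
  exact le_of_mul_le_mul_right htan hx0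

lemma exists_tan_eq_one_add_mul_self {δ : ℝ} (hδ0 : 0 < δ) (hδ : δ ≤ 1 / 50) :
    ∃ y, 0 < y ∧ y ≤ 1 / 2 ∧ tan y = (1 + δ) * y := by
  have hsqrt : √δ ≤ 1 / 2 := by
    rw [sqrt_le_left (by norm_num)]; linarith
  have hcont : ContinuousOn (fun y => tan y - (1 + δ) * y) (Icc (√δ) (1 / 2)) := by
    refine (continuousOn_tan_Ioo.mono fun y hy => ⟨?_, ?_⟩).sub (by fun_prop)
    · linarith [pi_pos, (sqrt_nonneg δ).trans hy.1]
    · linarith [pi_gt_three, hy.2]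
  -- at `p = √δ` one has `tan p ≤ p + p³ = (1 + δ) p`
  have hleft : tan √δ - (1 + δ) * √δ ≤ 0 := by
    have h := (abs_le.1 (abs_tan_sub_taylor_le (sqrt_nonneg δ) hsqrt)).2
    have hp := sqrt_nonneg δ
    have hp2 : √δ ^ 2 ≤ 1 / 4 := by nlinarith
    have hrhs : (1 + δ) * √δ = √δ + √δ ^ 3 := by
      nth_rewrite 1 [← sq_sqrt hδ0.le]; ring
    nlinarith [mul_le_mul_of_nonneg_left hp2 (pow_nonneg hp 3),
      mul_le_mul_of_nonneg_left hp2 (pow_nonneg hp 5)]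
  have hright : 0 ≤ tan (1 / 2) - (1 + δ) * (1 / 2) := by
    have h := abs_tan_sub_taylor_le (by norm_num : (0 : ℝ) ≤ 1 / 2) le_rfl
    rw [abs_le] at h
    linarith [h.1]
  obtain ⟨y, hy, hty⟩ := intermediate_value_Icc hsqrt hcont ⟨hleft, hright⟩
  exact ⟨y, (sqrt_pos.2 hδ0).trans_le hy.1, hy.2, sub_eq_zero.1 hty⟩

end Real

lemma abs_sub_inverse_series_le {u δ : ℝ} (hu0 : 0 ≤ u) (hu : u ≤ 1 / 4)
    (h : |δ - (u / 3 + 2 / 15 * u ^ 2)| ≤ u ^ 3) :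
    |u - (3 * δ - 18 / 5 * δ ^ 2)| ≤ 250 * δ ^ 3 := by
  rw [abs_le] at h
  have hu3 : u ^ 3 ≤ u ^ 2 / 4 := by nlinarith [mul_le_mul_of_nonneg_left hu (sq_nonneg u)]
  have hu4δ : u ≤ 4 * δ := by nlinarith
  have hδ : 0 ≤ δ := by linarith
  have hlin : |u - 3 * δ| ≤ 19 * δ ^ 2 := by
    rw [abs_le]; constructor <;> nlinarith [mul_le_mul hu4δ hu4δ hu0 (by linarith)]
  have hsq : |u ^ 2 - 9 * δ ^ 2| ≤ 133 * δ ^ 3 := by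
    have hsum : |u + 3 * δ| ≤ 7 * δ := by rw [abs_of_nonneg (by positivity)]; linarith
    calc |u ^ 2 - 9 * δ ^ 2| = |u - 3 * δ| * |u + 3 * δ| := by rw [← abs_mul]; ring_nf
      _ ≤ 19 * δ ^ 2 * (7 * δ) := mul_le_mul hlin hsum (abs_nonneg _) (by positivity)
      _ = 133 * δ ^ 3 := by ring
  have hcube : u ^ 3 ≤ 64 * δ ^ 3 := by
    have := pow_le_pow_left₀ hu0 hu4δ 3; linarith [show (4 * δ) ^ 3 = 64 * δ ^ 3 by ring]
  rw [abs_le] at hsq ⊢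
  constructor <;> nlinarith

lemma abs_mul_one_add_sq_sub_le {u δ : ℝ} (hδ0 : 0 ≤ δ) (hδ : δ ≤ 1 / 50)
    (h : |u - (3 * δ - 18 / 5 * δ ^ 2)| ≤ 250 * δ ^ 3) :
    |u * (1 + δ) ^ 2 - (3 * δ + 12 / 5 * δ ^ 2)| ≤ 300 * δ ^ 3 := by
  have hexp : u * (1 + δ) ^ 2 - (3 * δ + 12 / 5 * δ ^ 2) =
      (u - (3 * δ - 18 / 5 * δ ^ 2)) * (1 + δ) ^ 2 - (21 / 5 * δ ^ 3 + 18 / 5 * δ ^ 4) := by ring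
  rw [hexp]
  calc |(u - (3 * δ - 18 / 5 * δ ^ 2)) * (1 + δ) ^ 2 - (21 / 5 * δ ^ 3 + 18 / 5 * δ ^ 4)|
        ≤ |(u - (3 * δ - 18 / 5 * δ ^ 2)) * (1 + δ) ^ 2| + |21 / 5 * δ ^ 3 + 18 / 5 * δ ^ 4| :=
          abs_sub _ _
    _ = |u - (3 * δ - 18 / 5 * δ ^ 2)| * (1 + δ) ^ 2 + (21 / 5 * δ ^ 3 + 18 / 5 * δ ^ 4) := by
        rw [abs_mul, abs_of_nonneg (sq_nonneg (1 + δ)),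
          abs_of_nonneg (by positivity : 0 ≤ 21 / 5 * δ ^ 3 + 18 / 5 * δ ^ 4)]
    _ ≤ 250 * δ ^ 3 * (1 + δ) ^ 2 + (21 / 5 * δ ^ 3 + 18 / 5 * δ ^ 4) := by gcongr
    _ ≤ 300 * δ ^ 3 := by nlinarith [pow_nonneg hδ0 3, pow_nonneg hδ0 4]

/-- The hypothesis `δ - ε = δ * ε` says `δ = ε / (1 - ε)`. -/
lemma abs_sub_series_le_of_sub_eq_mul {M δ ε : ℝ} (hε0 : 0 < ε) (hε : ε ≤ 1 / 100) (hδ0 : 0 ≤ δ)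
    (hδε : δ - ε = δ * ε) (h : |M - (3 * δ + 12 / 5 * δ ^ 2)| ≤ 300 * δ ^ 3) :
    |M - (3 * ε + 27 / 5 * ε ^ 2)| ≤ 10000 * ε ^ 3 := by
  have hδ2ε : δ ≤ 2 * ε := by nlinarith [mul_le_mul_of_nonneg_left hε hδ0]
  have hdiff : 3 * δ + 12 / 5 * δ ^ 2 - (3 * ε + 27 / 5 * ε ^ 2) =
      3 * (δ * ε ^ 2) + 12 / 5 * (δ * ε * (δ + ε)) := by
    linear_combination (3 + 12 / 5 * (δ + ε) + 3 * ε) * hδε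
  have hcube : δ ^ 3 ≤ 8 * ε ^ 3 := by
    have := pow_le_pow_left₀ hδ0 hδ2ε 3; linarith [show (2 * ε) ^ 3 = 8 * ε ^ 3 by ring]
  have hsmall : 3 * (δ * ε ^ 2) + 12 / 5 * (δ * ε * (δ + ε)) ≤ 30 * ε ^ 3 := by
    have h1 : δ * ε ^ 2 ≤ 2 * ε * ε ^ 2 := by gcongr
    have h2 : δ * ε * (δ + ε) ≤ 2 * ε * ε * (2 * ε + ε) := by gcongr
    nlinarith
  have hnn : 0 ≤ 3 * (δ * ε ^ 2) + 12 / 5 * (δ * ε * (δ + ε)) := by positivity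
  rw [abs_le] at h ⊢
  constructor <;> nlinarith

lemma sqrt_mul_le_of_isLeast {r m lam y : ℝ} (hr : 0 < r)
    (hL : IsLeast {t : ℝ | 0 < t ∧ tan (√t * r) = √t * m} lam) (hy : 0 < y)
    (hty : tan y = y / r * m) : √lam * r ≤ y := by
  have hsqrt : √((y / r) ^ 2) = y / r := sqrt_sq (by positivity)
  have hmem : (y / r) ^ 2 ∈ {t : ℝ | 0 < t ∧ tan (√t * r) = √t * m} :=
    ⟨by positivity, by rw [hsqrt, div_mul_cancel₀ y hr.ne', hty]⟩
  calc √lam * r ≤ √((y / r) ^ 2) * r := by gcongr; exact hL.2 hmem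
    _ = y := by rw [hsqrt, div_mul_cancel₀ y hr.ne']

/-- Asymptotics of the smallest positive solution `λ` of `tan(√λ(ℓ − b)) = √λ ℓ`
(with `b = a/N`): writing `ε = b/ℓ`, one has `λ ℓ² = 3ε + (27/5)ε² + O(ε³)` as `ε → 0`. -/
theorem stmt5 :
    ∃ C > 0, ∃ ε₀ > 0, ∀ b ℓ lam : ℝ, 0 < b → b < ℓ → b / ℓ ≤ ε₀ →
      IsLeast {t : ℝ | 0 < t ∧ Real.tan (Real.sqrt t * (ℓ - b)) = Real.sqrt t * ℓ} lam →
      |lam * ℓ ^ 2 - (3 * (b / ℓ) + 27 / 5 * (b / ℓ) ^ 2)| ≤ C * (b / ℓ) ^ 3 := by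
  refine ⟨10000, by norm_num, 1 / 100, by norm_num, fun b ℓ lam hb hbℓ hε hL => ?_⟩
  have hℓ0 : 0 < ℓ := hb.trans hbℓ
  have hr : 0 < ℓ - b := sub_pos.2 hbℓ
  set ε := b / ℓ with hε_def
  set δ := b / (ℓ - b) with hδ_def
  have hδ0 : 0 < δ := div_pos hb hr
  have hℓ : ℓ / (ℓ - b) = 1 + δ := by rw [hδ_def]; field_simp; ring
  have hδε : δ - ε = δ * ε := by rw [hδ_def, hε_def]; field_simp; ring
  have hδ : δ ≤ 1 / 50 := by nlinarith [mul_le_mul_of_nonneg_left hε hδ0.le]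
  obtain ⟨y, hy0, hy, hty⟩ := exists_tan_eq_one_add_mul_self hδ0 hδ
  set x := √lam * (ℓ - b) with hx_def
  have hx0 : 0 < x := mul_pos (sqrt_pos.2 hL.1.1) hr
  have hxy : x ≤ y := sqrt_mul_le_of_isLeast hr hL hy0 (by rw [hty, ← hℓ]; ring)
  have htx : tan x = (1 + δ) * x := by rw [hL.1.2, ← hℓ, hx_def]; field_simp
  have hlam : lam * ℓ ^ 2 = x ^ 2 * (1 + δ) ^ 2 := by
    rw [← hℓ, mul_pow, sq_sqrt hL.1.1.le]; field_simp
  rw [hlam]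
  exact abs_sub_series_le_of_sub_eq_mul (div_pos hb hℓ0) hε hδ0.le hδε <|
    abs_mul_one_add_sq_sub_le hδ0.le hδ <| abs_sub_inverse_series_le (sq_nonneg x)
      (by nlinarith) (by simpa [← pow_mul] using abs_sub_taylor_le_of_tan_eq hx0 (hxy.trans hy) htx)
end

section
/- The pointwise bound w_ℓ(x) ≤ Ca/(N|x|) for the hard-core scattering solution: with f(r) as in the explicit Neumann hard-core problem, the function w(r) = 1 − f(r) satisfies w(r) ≤ C a/(N r) for b = a/N ≤ r ≤ ℓ, with a universal constant C, provided a/(Nℓ) is small enough. -/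
/-!
Write `θ = ℓ - b` and `x = √λ θ`. The root condition reads `θ sin x = ℓ x cos x`, i.e.
`b sin x = ℓ (sin x - x cos x) ≥ ℓ x³ / 4`, so once `x ≤ 1` we get `ℓ x² ≤ 4b`: the phase `x` is of
order `√(b/ℓ)`. That `x ≤ 1` follows from minimality of `λ`, since the intermediate value theorem
gives a root in `(0, 1]`. With `u = √λ (r - b) ≤ x`, the bound `sin u ≥ u - u³/6` then yields
`ℓ sin u ≥ x (r - b)`, while `r sin x ≤ r x = x (r - b) + b x ≤ x (r - b) + 2 b sin x`.
-/

open Real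

namespace Real

lemma tan_mul_eq_mul_iff {s θ ℓ : ℝ} (hθ : θ ≠ 0) (hcos : cos (s * θ) ≠ 0) :
    tan (s * θ) = s * ℓ ↔ θ * sin (s * θ) = ℓ * (s * θ) * cos (s * θ) := by
  rw [tan_eq_sin_div_cos, div_eq_iff hcos]
  constructor
  · intro h
    linear_combination θ * h
  · intro h
    refine mul_left_cancel₀ hθ ?_
    linear_combination h

lemma cube_div_four_le_sin_sub_mul_cos {x : ℝ} (hx0 : 0 ≤ x) (hx1 : x ≤ 1) :
    x ^ 3 / 4 ≤ sin x - x * cos x := by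
  have hcos : cos x ≤ 1 - x ^ 2 / 2 + x ^ 4 * (5 / 96) := by
    have := (abs_le.1 (cos_bound (x := x) (by rwa [abs_of_nonneg hx0]))).2
    rw [abs_of_nonneg hx0] at this
    linarith
  have hx2 : x ^ 2 ≤ 1 := pow_le_one₀ hx0 hx1
  nlinarith [sin_ge_sub_cube hx0, mul_le_mul_of_nonneg_left hcos hx0,
    mul_le_mul_of_nonneg_left hx2 (pow_nonneg hx0 3)]

end Real

section HardCore

variable {b ℓ : ℝ}

/-- `(ℓ - b) sin y - ℓ y cos y` is negative at `y = √(b/ℓ)` and positive at `y = 1`. -/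
lemma exists_pos_le_one_sin_eq_mul_cos (hb : 0 < b) (hbℓ : 3 * b < ℓ) :
    ∃ y, 0 < y ∧ y ≤ 1 ∧ (ℓ - b) * sin y = ℓ * y * cos y := by
  have hℓ : 0 < ℓ := by linarith
  set g : ℝ → ℝ := fun y => (ℓ - b) * sin y - ℓ * y * cos y
  set c := √(b / ℓ)
  have hc : 0 < c := sqrt_pos.2 (div_pos hb hℓ)
  have hc1 : c ≤ 1 := sqrt_le_one.2 ((div_le_one hℓ).2 (by linarith))
  have hcℓ : c ^ 2 * ℓ = b := by rw [sq_sqrt (div_pos hb hℓ).le]; field_simp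
  have hgc : g c < 0 := by
    have hsin := mul_le_mul_of_nonneg_left (sin_le hc.le) (by linarith : 0 ≤ ℓ - b)
    have hcos := mul_le_mul_of_nonneg_left (one_sub_sq_div_two_le_cos (x := c))
      (mul_pos hℓ hc).le
    nlinarith [mul_pos hb hc]
  have hg1 : 0 < g 1 := by
    have hsin : 5 / 6 ≤ sin 1 := by linarith [sin_ge_sub_cube (x := 1) zero_le_one]
    have hsin' := mul_le_mul_of_nonneg_left hsin (by linarith : 0 ≤ ℓ - b)
    have hcos := mul_le_mul_of_nonneg_left cos_one_le hℓ.le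
    simp only [g]
    linarith
  have hg : Continuous g := by fun_prop
  obtain ⟨y, ⟨hcy, hy1⟩, hy⟩ :=
    intermediate_value_Icc hc1 hg.continuousOn ⟨hgc.le, hg1.le⟩
  exact ⟨y, hc.trans_le hcy, hy1, sub_eq_zero.1 hy⟩

lemma sqrt_mul_le_one_of_isLeast (hb : 0 < b) (hbℓ : 3 * b < ℓ) {lam : ℝ}
    (hlam : IsLeast {t : ℝ | 0 < t ∧ tan (√t * (ℓ - b)) = √t * ℓ} lam) :
    √lam * (ℓ - b) ≤ 1 := by
  obtain ⟨y, hy0, hy1, hy⟩ := exists_pos_le_one_sin_eq_mul_cos hb hbℓ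
  have hθ : 0 < ℓ - b := by linarith
  have hsqrt : √((y / (ℓ - b)) ^ 2) * (ℓ - b) = y := by
    rw [sqrt_sq (div_pos hy0 hθ).le]; field_simp
  have hmem : (y / (ℓ - b)) ^ 2 ∈ {t : ℝ | 0 < t ∧ tan (√t * (ℓ - b)) = √t * ℓ} := by
    refine ⟨by positivity, ?_⟩
    rw [tan_mul_eq_mul_iff hθ.ne' (by rw [hsqrt]; exact (cos_pos_of_le_one (by
      rwa [abs_of_pos hy0])).ne'), hsqrt]
    exact hy
  calc √lam * (ℓ - b) ≤ √((y / (ℓ - b)) ^ 2) * (ℓ - b) :=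
        mul_le_mul_of_nonneg_right (sqrt_le_sqrt (hlam.2 hmem)) hθ.le
    _ = y := hsqrt
    _ ≤ 1 := hy1

lemma sq_mul_le_of_sin_eq_mul_cos {x : ℝ} (hx0 : 0 < x) (hx1 : x ≤ 1) (hb : 0 ≤ b) (hℓ : 0 ≤ ℓ)
    (hx : (ℓ - b) * sin x = ℓ * x * cos x) : x ^ 2 * ℓ ≤ 4 * b := by
  have hcube := mul_le_mul_of_nonneg_left (cube_div_four_le_sin_sub_mul_cos hx0.le hx1) hℓ
  have hsin := mul_le_mul_of_nonneg_left (sin_le hx0.le) hb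
  have : x * (x ^ 2 * ℓ) ≤ x * (4 * b) := by nlinarith
  exact le_of_mul_le_mul_left this hx0

variable {s r : ℝ}

lemma mul_sub_le_mul_sin (hs : 0 ≤ s) (hb : 0 ≤ b) (hbr : b ≤ r) (hrℓ : r ≤ ℓ)
    (hsq : (s * (ℓ - b)) ^ 2 * ℓ ≤ 4 * b) :
    s * (ℓ - b) * (r - b) ≤ ℓ * sin (s * (r - b)) := by
  set u := s * (r - b)
  have hu0 : 0 ≤ u := mul_nonneg hs (by linarith)
  have hux : u ≤ s * (ℓ - b) := mul_le_mul_of_nonneg_left (by linarith) hs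
  have hℓ : 0 ≤ ℓ := by linarith
  have hu2 : u ^ 2 * ℓ ≤ 4 * b :=
    le_trans (mul_le_mul_of_nonneg_right (pow_le_pow_left₀ hu0 hux 2) hℓ) hsq
  have hsin := mul_le_mul_of_nonneg_left (sin_ge_sub_cube hu0) hℓ
  have hcube := mul_le_mul_of_nonneg_left hu2 hu0
  have : s * (ℓ - b) * (r - b) = (ℓ - b) * u := by ring
  nlinarith [mul_nonneg hb hu0]

lemma one_sub_mul_sin_div_le (hs : 0 < s) (hb : 0 < b) (hbr : b ≤ r) (hrℓ : r ≤ ℓ)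
    (hbℓ : b < ℓ) (hx1 : s * (ℓ - b) ≤ 1) (hsq : (s * (ℓ - b)) ^ 2 * ℓ ≤ 4 * b) :
    1 - ℓ * sin (s * (r - b)) / (r * sin (s * (ℓ - b))) ≤ 2 * b / r := by
  set x := s * (ℓ - b)
  have hr : 0 < r := hb.trans_le hbr
  have hx0 : 0 < x := mul_pos hs (by linarith)
  have hsinx : 0 < sin x := sin_pos_of_pos_of_le_one hx0 hx1
  have hx_le : x ≤ 2 * sin x := by
    linarith [sin_ge_sub_cube hx0.le, pow_le_of_le_one hx0.le hx1 (by norm_num : 3 ≠ 0)]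
  have key : r * sin x ≤ ℓ * sin (s * (r - b)) + 2 * b * sin x := by
    nlinarith [mul_sub_le_mul_sin hs.le hb.le hbr hrℓ hsq,
      mul_le_mul_of_nonneg_left (sin_le hx0.le) hr.le, mul_le_mul_of_nonneg_left hx_le hb.le]
  rw [sub_le_comm, le_div_iff₀ (mul_pos hr hsinx)]
  calc (1 - 2 * b / r) * (r * sin x) = r * sin x - 2 * b * sin x := by field_simp
    _ ≤ ℓ * sin (s * (r - b)) := by linarith

end HardCore

/-- Pointwise bound `w(r) = 1 − f(r) ≤ C b/r` for the explicit hard-core Neumann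
scattering solution `f(r) = ℓ sin(√λ(r − b))/(r sin(√λ(ℓ − b)))`, with `λ` the smallest
positive solution of `tan(√λ(ℓ − b)) = √λ ℓ`, provided `ε = b/ℓ` is small enough. -/
theorem stmt14 :
    ∃ ε₀ > 0, ∃ C > 0, ∀ b ℓ lam : ℝ, 0 < b → b < ℓ → b / ℓ ≤ ε₀ →
      IsLeast {t : ℝ | 0 < t ∧ Real.tan (Real.sqrt t * (ℓ - b)) = Real.sqrt t * ℓ} lam →
      ∀ r ∈ Set.Icc b ℓ,
        1 - (ℓ * Real.sin (Real.sqrt lam * (r - b)))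
              / (r * Real.sin (Real.sqrt lam * (ℓ - b)))
          ≤ C * b / r := by
  refine ⟨1 / 4, by norm_num, 2, by norm_num, ?_⟩
  intro b ℓ lam hb hbℓ hε hlam r ⟨hbr, hrℓ⟩
  have hℓ : 0 < ℓ := hb.trans hbℓ
  have h3b : 3 * b < ℓ := by rw [div_le_iff₀ hℓ] at hε; linarith
  have hs : 0 < √lam := sqrt_pos.2 hlam.1.1
  have hx0 : 0 < √lam * (ℓ - b) := mul_pos hs (by linarith)
  have hx1 := sqrt_mul_le_one_of_isLeast hb h3b hlam
  have hroot : (ℓ - b) * sin (√lam * (ℓ - b)) = ℓ * (√lam * (ℓ - b)) * cos (√lam * (ℓ - b)) :=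
    (tan_mul_eq_mul_iff (by linarith) (cos_pos_of_le_one (by rwa [abs_of_pos hx0])).ne').1
      hlam.1.2
  exact one_sub_mul_sin_div_le hs hb hbr hrℓ hbℓ hx1
    (sq_mul_le_of_sin_eq_mul_cos hx0 hx1 hb.le hℓ.le hroot)
end
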